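/- Let T : {(p,q) ∈ ℂ² : q ≠ 0} → ℂ² be defined by T(p,q) = (1/conj(q), conj(p)·q²). Then T preserves the standard focus-focus Hamiltonian, H(T(p,q)) = H(p,q), and T is a symplectomorphism onto its image: for every (p,q) with q ≠ 0 and all u, v ∈ ℂ², ω(DT(p,q)u, DT(p,q)v) = ω(u,v), where DT denotes the real Fréchet derivative. -/

import Mathlib

/-- The standard focus-focus Hamiltonian `H(p,q) = -conj(p)·q`. -/
noncomputable def H : ℂ × ℂ → ℂ := fun x => -(starRingEnd ℂ) x.1 * x.2

/-- The standard symplectic form on `ℂ²`: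
`ω((u,v),(u',v')) = Re(conj(u)·v' − conj(u')·v)`. -/
noncomputable def ω : ℂ × ℂ → ℂ × ℂ → ℝ := fun u v =>
  ((starRingEnd ℂ) u.1 * v.2 - (starRingEnd ℂ) v.1 * u.2).re

/-- The transition map `T(p,q) = (1/conj(q), conj(p)·q²)` between the two charts
of the model focus-focus neighborhood with `S ≡ 0`. -/
noncomputable def T : ℂ × ℂ → ℂ × ℂ := fun x =>
  (1 / (starRingEnd ℂ) x.2, (starRingEnd ℂ) x.1 * x.2 ^ 2)

/-- On `{q ≠ 0}`, `T` preserves the Hamiltonian `H` and is a symplectomorphism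
onto its image: its real Fréchet derivative preserves `ω`. -/
theorem stmt_17 (x : ℂ × ℂ) (hq : x.2 ≠ 0) :
    H (T x) = H x ∧
    ∀ u v : ℂ × ℂ, ω (fderiv ℝ T x u) (fderiv ℝ T x v) = ω u v := by
  have hconj : ∀ z : ℂ, HasFDerivAt (starRingEnd ℂ)
      (Complex.conjCLE.toContinuousLinearMap) z := fun z =>
    Complex.conjCLE.toContinuousLinearMap.hasFDerivAt
  have hsnd : HasFDerivAt (fun y : ℂ × ℂ => y.2)
      (ContinuousLinearMap.snd ℝ ℂ ℂ) x := hasFDerivAt_snd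
  have hfst : HasFDerivAt (fun y : ℂ × ℂ => y.1)
      (ContinuousLinearMap.fst ℝ ℂ ℂ) x := hasFDerivAt_fst
  have hinv : HasFDerivAt (fun z : ℂ => z⁻¹)
      (((1 : ℂ →L[ℂ] ℂ).smulRight (-(x.2 ^ 2)⁻¹)).restrictScalars ℝ) x.2 :=
    ((hasDerivAt_inv hq).hasFDerivAt).restrictScalars ℝ
  have h1 : HasFDerivAt (fun y : ℂ × ℂ => (starRingEnd ℂ) (y.2⁻¹))
      (Complex.conjCLE.toContinuousLinearMap.comp
        ((((1 : ℂ →L[ℂ] ℂ).smulRight (-(x.2 ^ 2)⁻¹)).restrictScalars ℝ).comp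
          (ContinuousLinearMap.snd ℝ ℂ ℂ))) x :=
    (hconj _).comp x (hinv.comp x hsnd)
  have h2 : HasFDerivAt (fun y : ℂ × ℂ => (starRingEnd ℂ) y.1 * y.2 ^ 2)
      ((starRingEnd ℂ) x.1 • (2 * x.2) • ContinuousLinearMap.snd ℝ ℂ ℂ +
        x.2 ^ 2 • Complex.conjCLE.toContinuousLinearMap.comp (ContinuousLinearMap.fst ℝ ℂ ℂ)) x := by
    have ha : HasFDerivAt (fun y : ℂ × ℂ => (starRingEnd ℂ) y.1)
        (Complex.conjCLE.toContinuousLinearMap.comp (ContinuousLinearMap.fst ℝ ℂ ℂ)) x :=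
      (hconj _).comp x hfst
    have hb : HasFDerivAt (fun y : ℂ × ℂ => y.2 ^ 2)
        ((2 * x.2) • (ContinuousLinearMap.snd ℝ ℂ ℂ)) x := by
      have : HasFDerivAt (fun y : ℂ × ℂ => y.2 * y.2)
          (x.2 • ContinuousLinearMap.snd ℝ ℂ ℂ + x.2 • ContinuousLinearMap.snd ℝ ℂ ℂ) x :=
        hsnd.mul hsnd
      have hext : x.2 • ContinuousLinearMap.snd ℝ ℂ ℂ + x.2 • ContinuousLinearMap.snd ℝ ℂ ℂ
          = (2 * x.2) • ContinuousLinearMap.snd ℝ ℂ ℂ := by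
        ext y <;>
          simp [ContinuousLinearMap.comp_apply, ContinuousLinearMap.add_apply,
            ContinuousLinearMap.smul_apply, smul_eq_mul] <;> ring
      rw [hext] at this
      exact this.congr_of_eventuallyEq (Filter.Eventually.of_forall fun y => sq y.2)
    simpa [Pi.mul_def] using ha.mul hb
  have hTeq : T = fun y : ℂ × ℂ => (((starRingEnd ℂ) y.2)⁻¹, (starRingEnd ℂ) y.1 * y.2 ^ 2) := by
    funext y; simp [T, one_div]
  have hT : HasFDerivAt (fun y : ℂ × ℂ => (((starRingEnd ℂ) y.2)⁻¹, (starRingEnd ℂ) y.1 * y.2 ^ 2))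
      ((Complex.conjCLE.toContinuousLinearMap.comp
        ((((1 : ℂ →L[ℂ] ℂ).smulRight (-(x.2 ^ 2)⁻¹)).restrictScalars ℝ).comp
          (ContinuousLinearMap.snd ℝ ℂ ℂ))).prod
        ((starRingEnd ℂ) x.1 • (2 * x.2) • ContinuousLinearMap.snd ℝ ℂ ℂ +
          x.2 ^ 2 • Complex.conjCLE.toContinuousLinearMap.comp (ContinuousLinearMap.fst ℝ ℂ ℂ))) x := by
    have := h1.prodMk h2
    simpa using this
  refine ⟨?_, ?_⟩
  · simp only [H, T, map_mul, map_one, map_div₀, Complex.conj_conj, one_div, map_inv₀]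
    field_simp
  · intro u v
    rw [hTeq, hT.fderiv]
    simp only [ω, ContinuousLinearMap.prod_apply, ContinuousLinearMap.comp_apply,
      ContinuousLinearMap.add_apply, ContinuousLinearMap.smulRight_apply,
      ContinuousLinearMap.coe_restrictScalars', ContinuousLinearMap.smul_apply,
      ContinuousLinearMap.coe_fst', ContinuousLinearMap.coe_snd',
      ContinuousLinearMap.one_apply, ContinuousLinearEquiv.coe_coe,
      Complex.conjCLE_apply, smul_eq_mul]
    congr 1
    simp only [map_mul, map_add, Complex.conj_conj, map_neg, map_inv₀, map_pow]
    field_simp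
    ring
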